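/- arXiv:2101.10723 — 2 statements merged into one kernel-verified Lean document; each statement's English description precedes it below -/
import Mathlib

section
/- For every finite normal form game G with strict preferences, every initial reference point a₀ ∈ A, every positive integer k, and every admissible player function I, the game Γ(a₀,k,I) is a well-defined finite extensive form game with perfect information (every path of play reaches a terminal node after finitely many steps), and consequently it possesses a subgame perfect equilibrium in pure strategies. -/
namespace NoHarm

/-- A finite normal form game with `n` players: finite action sets `A i`,
nonempty, with decidable equality, and utility functions `u i : Profile → ℝ`. -/
structure Game (n : ℕ) where
  A : Fin n → Type
  fintypeA : ∀ i, Fintype (A i)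
  decA : ∀ i, DecidableEq (A i)
  neA : ∀ i, Nonempty (A i)
  u : Fin n → (∀ i, A i) → ℝ

attribute [instance] Game.fintypeA Game.decA Game.neA

/-- Action profiles of `G`. -/
abbrev Profile {n : ℕ} (G : Game n) : Type := ∀ i, G.A i

/-- A recorded move in the extensive form game `Γ`: the acting player together
with their choice (`none` = pass, `some a` = choose action `a`; choosing the
current component of the state is "staying", any other action is "moving"). -/
abbrev Move {n : ℕ} (G : Game n) : Type := Σ i : Fin n, Option (G.A i)

/-- A node of `Γ`, identified with the history of moves leading to it
(the root is `[]`). -/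
abbrev Hist {n : ℕ} (G : Game n) : Type := List (Move G)

variable {n : ℕ}

/-- One step of the left fold computing, along a history, the triple
(current state, current reference point, player who established the current
reference point by staying -- `none` for the initial reference point). -/
def stepFold (G : Game n) (x : Profile G × Profile G × Option (Fin n)) (m : Move G) :
    Profile G × Profile G × Option (Fin n) :=
  match m with
  | ⟨_, none⟩ => x
  | ⟨i, some a⟩ =>
    if a = x.1 i then (x.1, x.1, some i)
    else (Function.update x.1 i a, x.2.1, x.2.2)

/-- The (state, reference point, proposer) data at the node `h` of `Γ(a0,·,·)`. -/
def fold3 (G : Game n) (a0 : Profile G) (h : Hist G) :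
    Profile G × Profile G × Option (Fin n) :=
  h.foldl (stepFold G) (a0, a0, none)

/-- The state `S(x)` at a node. -/
def state (G : Game n) (a0 : Profile G) (h : Hist G) : Profile G := (fold3 G a0 h).1

/-- The reference point at a node (the most recent state at which a player
stayed, initially `a0`). -/
def refpt (G : Game n) (a0 : Profile G) (h : Hist G) : Profile G := (fold3 G a0 h).2.1

/-- The player who established the current reference point by staying
(`none` if it is still the initial reference point `a0`). -/
def proposer (G : Game n) (a0 : Profile G) (h : Hist G) : Option (Fin n) :=
  (fold3 G a0 h).2.2

/-- `m` is a stay action at the node `h`: the mover chooses exactly the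
component of the current state belonging to them. -/
def IsStay (G : Game n) (a0 : Profile G) (h : Hist G) (m : Move G) : Prop :=
  m.2 = some (state G a0 h m.1)

/-- Termination condition (i): one player stayed at a state `b`, making it
the reference point, and a different player subsequently also stays at `b`. -/
def TerminalStay (G : Game n) (a0 : Profile G) (h : Hist G) : Prop :=
  ∃ (h' : Hist G) (m : Move G) (i : Fin n),
    h = h' ++ [m] ∧ IsStay G a0 h' m ∧ refpt G a0 h' = state G a0 h' ∧
    proposer G a0 h' = some i ∧ i ≠ m.1

/-- Termination condition (ii): all `n` players consecutively pass
(the last `n` moves are passes and every player is among their movers). -/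
def TerminalPass (G : Game n) (h : Hist G) : Prop :=
  n ≤ h.length ∧ (∀ m ∈ h.drop (h.length - n), m.2 = none) ∧
    (∀ i : Fin n, ∃ m ∈ h.drop (h.length - n), m.1 = i)

/-- Terminal nodes of `Γ(a0,·,·)`. -/
def Terminal (G : Game n) (a0 : Profile G) (h : Hist G) : Prop :=
  TerminalStay G a0 h ∨ TerminalPass G h

/-- Number of predecessor nodes of `h` having the same state as `h` at which
the move `m` was made. -/
def countAct (G : Game n) (a0 : Profile G) (h : Hist G) (m : Move G) : ℕ :=
  ((Finset.range h.length).filter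
    (fun t => h[t]? = some m ∧ state G a0 (h.take t) = state G a0 h)).card

/-- Availability of the choice `c` for player `i` at node `h`: pass is always
available, and an action `a` is available iff `i` has chosen `a` at fewer than
`k` predecessor nodes carrying the same state as `h`. -/
def availAct (G : Game n) (a0 : Profile G) (k : ℕ) (h : Hist G) {i : Fin n}
    (c : Option (G.A i)) : Prop :=
  ∀ a : G.A i, c = some a → countAct G a0 h ⟨i, some a⟩ < k

/-- `h` is a (valid) node of the game tree of `Γ(a0,k,I)`: at each step the
recorded mover is the active player given by the player function `I`, the
chosen action was available, and no proper predecessor is terminal. -/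
structure IsNode (G : Game n) (a0 : Profile G) (k : ℕ) (I : Hist G → Fin n)
    (h : Hist G) : Prop where
  mover : ∀ (t : ℕ) (ht : t < h.length), (h.get ⟨t, ht⟩).1 = I (h.take t)
  avail : ∀ (t : ℕ) (ht : t < h.length), availAct G a0 k (h.take t) (h.get ⟨t, ht⟩).2
  nonterm : ∀ t < h.length, ¬ Terminal G a0 (h.take t)

/-- The player function is admissible: along every path of play the numbers of
nodes at which any two players have been active differ by at most one. -/
def Admissible (G : Game n) (a0 : Profile G) (k : ℕ) (I : Hist G → Fin n) : Prop :=
  ∀ h, IsNode G a0 k I h → ∀ i j : Fin n,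
    (h.map Sigma.fst).count i ≤ (h.map Sigma.fst).count j + 1

/-- A pure strategy of player `i`: a choice (pass or an action) at every node. -/
abbrev Strategy (G : Game n) (i : Fin n) : Type := Hist G → Option (G.A i)

/-- A pure strategy profile. -/
abbrev StratProfile (G : Game n) : Type := ∀ i, Strategy G i

/-- A strategy profile is valid if at every non-terminal node of the tree the
active player's prescribed choice is available. -/
def ValidProfile (G : Game n) (a0 : Profile G) (k : ℕ) (I : Hist G → Fin n)
    (σ : StratProfile G) : Prop :=
  ∀ h, IsNode G a0 k I h → ¬ Terminal G a0 h → availAct G a0 k h (σ (I h) h)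

open Classical in
/-- Play according to `σ` for (at most) the given number of steps from a node,
stopping at terminal nodes. -/
noncomputable def playN (G : Game n) (a0 : Profile G) (I : Hist G → Fin n)
    (σ : StratProfile G) : ℕ → Hist G → Hist G
  | 0, h => h
  | (t + 1), h =>
    if Terminal G a0 h then h
    else playN G a0 I σ t (h ++ [⟨I h, σ (I h) h⟩])

/-- A (generous) upper bound for the length of any play of `Γ(a0,k,I)`. -/
def bound (G : Game n) (k : ℕ) : ℕ :=
  ((k + 2) * (Fintype.card (Profile G) + 2) * ((∑ i, Fintype.card (G.A i)) + 2) + 2)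
    * (n + 2) * 4

/-- The outcome of `σ` in the subgame rooted at `h`: the reference point at the
terminal node reached by playing `σ` from `h`. -/
noncomputable def outcomeFrom (G : Game n) (a0 : Profile G) (k : ℕ)
    (I : Hist G → Fin n) (σ : StratProfile G) (h : Hist G) : Profile G :=
  refpt G a0 (playN G a0 I σ (bound G k + 1) h)

/-- The outcome of the strategy profile `σ` in `Γ(a0,k,I)`. -/
noncomputable def outcome (G : Game n) (a0 : Profile G) (k : ℕ)
    (I : Hist G → Fin n) (σ : StratProfile G) : Profile G :=
  outcomeFrom G a0 k I σ []

/-- `σ` satisfies the no-harm principle: every stay action it prescribes, at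
every (on- or off-path) non-terminal node of the tree, does not harm any other
player relative to the reference point at that node. -/
def SatNHP (G : Game n) (a0 : Profile G) (k : ℕ) (I : Hist G → Fin n)
    (σ : StratProfile G) : Prop :=
  ∀ h, IsNode G a0 k I h → ¬ Terminal G a0 h →
    σ (I h) h = some (state G a0 h (I h)) →
    ∀ j, j ≠ I h → G.u j (refpt G a0 h) ≤ G.u j (state G a0 h)

/-- No-harm equilibrium of `Γ(a0,k,I)`: a valid strategy profile satisfying the
NHP such that at every non-terminal node the active player's choice is a best
response among deviations keeping the profile valid and NHP-compliant. -/
def NHE (G : Game n) (a0 : Profile G) (k : ℕ) (I : Hist G → Fin n)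
    (σ : StratProfile G) : Prop :=
  ValidProfile G a0 k I σ ∧ SatNHP G a0 k I σ ∧
  ∀ h, IsNode G a0 k I h → ¬ Terminal G a0 h →
    ∀ τ : Strategy G (I h),
      ValidProfile G a0 k I (Function.update σ (I h) τ) →
      SatNHP G a0 k I (Function.update σ (I h) τ) →
      G.u (I h) (outcomeFrom G a0 k I (Function.update σ (I h) τ) h) ≤
        G.u (I h) (outcomeFrom G a0 k I σ h)

/-- Subgame perfect equilibrium of `Γ(a0,k,I)` (no NHP constraint). -/
def SPE (G : Game n) (a0 : Profile G) (k : ℕ) (I : Hist G → Fin n)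
    (σ : StratProfile G) : Prop :=
  ValidProfile G a0 k I σ ∧
  ∀ h, IsNode G a0 k I h → ¬ Terminal G a0 h →
    ∀ τ : Strategy G (I h),
      ValidProfile G a0 k I (Function.update σ (I h) τ) →
      G.u (I h) (outcomeFrom G a0 k I (Function.update σ (I h) τ) h) ≤
        G.u (I h) (outcomeFrom G a0 k I σ h)

/-- `b` Pareto dominates `a`. -/
def ParetoDom (G : Game n) (b a : Profile G) : Prop :=
  (∀ i, G.u i a ≤ G.u i b) ∧ ∃ i, G.u i a < G.u i b

/-- `a` is Pareto optimal. -/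
def ParetoOpt (G : Game n) (a : Profile G) : Prop := ∀ b, ¬ ParetoDom G b a

/-- `b` strictly Pareto dominates `a`. -/
def StrictDom (G : Game n) (b a : Profile G) : Prop := ∀ i, G.u i a < G.u i b

/-- `a` is weakly Pareto optimal. -/
def WeakParetoOpt (G : Game n) (a : Profile G) : Prop := ∀ b, ¬ StrictDom G b a

/-- Preferences are strict: each utility function is injective on profiles. -/
def StrictPrefs (G : Game n) : Prop := ∀ i, Function.Injective (G.u i)


/-! ### Auxiliary lemmas -/

section Aux

variable (G : Game n) (a0 : Profile G) (k : ℕ) (I : Hist G → Fin n)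

/-- Prefixes of nodes are nodes. -/
theorem IsNode.take {h : Hist G} (hh : IsNode G a0 k I h) (s : ℕ) :
    IsNode G a0 k I (h.take s) := by
  constructor
  · intro t ht
    have ht' : t < h.length := lt_of_lt_of_le ht (by simpa using (List.length_take_le s h))
    have : (h.take s).get ⟨t, ht⟩ = h.get ⟨t, ht'⟩ := by
      simp [List.get_eq_getElem, List.getElem_take]
    rw [this, List.take_take]
    have hts : min t s = t := by
      have : t < min s h.length := by simpa using ht
      omega
    rw [hts]
    exact hh.mover t ht'
  · intro t ht
    have ht' : t < h.length := lt_of_lt_of_le ht (by simpa using (List.length_take_le s h))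
    have : (h.take s).get ⟨t, ht⟩ = h.get ⟨t, ht'⟩ := by
      simp [List.get_eq_getElem, List.getElem_take]
    rw [this, List.take_take]
    have hts : min t s = t := by
      have : t < min s h.length := by simpa using ht
      omega
    rw [hts]
    exact hh.avail t ht'
  · intro t ht
    have ht' : t < h.length := lt_of_lt_of_le ht (by simpa using (List.length_take_le s h))
    rw [List.take_take]
    have hts : min t s = t := by
      have : t < min s h.length := by simpa using ht
      omega
    rw [hts]
    exact hh.nonterm t ht'

theorem isNode_nil : IsNode G a0 k I [] := by
  constructor <;> intro t ht <;> simp at ht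

/-- Children of non-terminal nodes are nodes. -/
theorem IsNode.child {h : Hist G} (hh : IsNode G a0 k I h)
    (hnt : ¬ Terminal G a0 h) {c : Option (G.A (I h))}
    (hc : availAct G a0 k h c) : IsNode G a0 k I (h ++ [⟨I h, c⟩]) := by
  have hlen : (h ++ [(⟨I h, c⟩ : Move G)]).length = h.length + 1 := by simp
  have htake : ∀ t ≤ h.length, (h ++ [(⟨I h, c⟩ : Move G)]).take t = h.take t := by
    intro t ht; exact List.take_append_of_le_length ht
  constructor
  · intro t ht
    rcases Nat.lt_or_ge t h.length with h1 | h1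
    · have : (h ++ [(⟨I h, c⟩ : Move G)]).get ⟨t, ht⟩ = h.get ⟨t, h1⟩ := by
        simp [List.get_eq_getElem, List.getElem_append_left h1]
      rw [this, htake t (le_of_lt h1)]
      exact hh.mover t h1
    · have h2 : t = h.length := by omega
      subst h2
      have : (h ++ [(⟨I h, c⟩ : Move G)]).get ⟨h.length, ht⟩ = ⟨I h, c⟩ := by
        simp [List.get_eq_getElem]
      rw [this, htake h.length le_rfl, List.take_length]
  · intro t ht
    rcases Nat.lt_or_ge t h.length with h1 | h1
    · have : (h ++ [(⟨I h, c⟩ : Move G)]).get ⟨t, ht⟩ = h.get ⟨t, h1⟩ := by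
        simp [List.get_eq_getElem, List.getElem_append_left h1]
      rw [this, htake t (le_of_lt h1)]
      exact hh.avail t h1
    · have h2 : t = h.length := by omega
      subst h2
      have : (h ++ [(⟨I h, c⟩ : Move G)]).get ⟨h.length, ht⟩ = ⟨I h, c⟩ := by
        simp [List.get_eq_getElem]
      rw [this, htake h.length le_rfl, List.take_length]
      exact hc
  · intro t ht
    rcases Nat.lt_or_ge t h.length with h1 | h1
    · rw [htake t (le_of_lt h1)]; exact hh.nonterm t h1
    · have h2 : t = h.length := by omega
      subst h2
      rw [htake h.length le_rfl, List.take_length]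
      exact hnt

end Aux


section Play

variable {G : Game n} {a0 : Profile G} {k : ℕ} {I : Hist G → Fin n}

theorem avail_none {h : Hist G} {i : Fin n} : availAct G a0 k h (none : Option (G.A i)) := by
  intro a ha; cases ha

theorem playN_terminal {σ : StratProfile G} {h : Hist G} (ht : Terminal G a0 h) :
    ∀ d, playN G a0 I σ d h = h := by
  intro d; cases d with
  | zero => rfl
  | succ d => simp [playN, ht]

theorem playN_succ {σ : StratProfile G} {h : Hist G} (hnt : ¬ Terminal G a0 h) (d : ℕ) :
    playN G a0 I σ (d + 1) h = playN G a0 I σ d (h ++ [⟨I h, σ (I h) h⟩]) := by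
  simp [playN, hnt]

theorem playN_add {σ : StratProfile G} (a b : ℕ) (h : Hist G) :
    playN G a0 I σ (a + b) h = playN G a0 I σ b (playN G a0 I σ a h) := by
  induction a generalizing h with
  | zero => simp [playN]
  | succ a ih =>
    by_cases ht : Terminal G a0 h
    · rw [playN_terminal ht, playN_terminal ht, playN_terminal ht]
    · have : a + 1 + b = (a + b) + 1 := by omega
      rw [this, playN_succ ht, playN_succ ht, ih]

theorem playN_node {σ : StratProfile G} (hσ : ValidProfile G a0 k I σ) :
    ∀ (d : ℕ) (h : Hist G), IsNode G a0 k I h → IsNode G a0 k I (playN G a0 I σ d h) := by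
  intro d
  induction d with
  | zero => intro h hh; exact hh
  | succ d ih =>
    intro h hh
    by_cases ht : Terminal G a0 h
    · rw [playN_terminal ht]; exact hh
    · rw [playN_succ ht]
      exact ih _ (hh.child G a0 k I ht (hσ h hh ht))

variable (hB : ∀ h : Hist G, IsNode G a0 k I h → h.length ≤ bound G k)
include hB

theorem play_terminal {σ : StratProfile G} (hσ : ValidProfile G a0 k I σ) :
    ∀ (d : ℕ) (h : Hist G), IsNode G a0 k I h → bound G k + 1 ≤ h.length + d →
      Terminal G a0 (playN G a0 I σ d h) := by
  intro d
  induction d with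
  | zero =>
    intro h hh hd
    exact absurd (hB h hh) (by omega)
  | succ d ih =>
    intro h hh hd
    by_cases ht : Terminal G a0 h
    · rw [playN_terminal ht]; exact ht
    · rw [playN_succ ht]
      refine ih _ (hh.child G a0 k I ht (hσ h hh ht)) ?_
      simp; omega

theorem outcome_stable {σ : StratProfile G} (hσ : ValidProfile G a0 k I σ)
    {h : Hist G} (hh : IsNode G a0 k I h) {d : ℕ} (hd : bound G k + 1 ≤ h.length + d) :
    refpt G a0 (playN G a0 I σ d h) = outcomeFrom G a0 k I σ h := by
  set e := bound G k + 1 - h.length with he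
  have hterm : Terminal G a0 (playN G a0 I σ e h) :=
    play_terminal hB hσ e h hh (by omega)
  have key : ∀ d', e ≤ d' → playN G a0 I σ d' h = playN G a0 I σ e h := by
    intro d' hd'
    have : d' = e + (d' - e) := by omega
    rw [this, playN_add, playN_terminal hterm]
  rw [outcomeFrom, key d (by omega), key (bound G k + 1) (by omega)]

omit hB in
theorem outcomeFrom_terminal {σ : StratProfile G} {h : Hist G} (ht : Terminal G a0 h) :
    outcomeFrom G a0 k I σ h = refpt G a0 h := by
  rw [outcomeFrom, playN_terminal ht]

theorem outcomeFrom_succ {σ : StratProfile G} (hσ : ValidProfile G a0 k I σ)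
    {h : Hist G} (hh : IsNode G a0 k I h) (hnt : ¬ Terminal G a0 h) :
    outcomeFrom G a0 k I σ h = outcomeFrom G a0 k I σ (h ++ [⟨I h, σ (I h) h⟩]) := by
  have hchild : IsNode G a0 k I (h ++ [⟨I h, σ (I h) h⟩]) :=
    hh.child G a0 k I hnt (hσ h hh hnt)
  rw [outcomeFrom, playN_succ hnt]
  exact outcome_stable hB hσ hchild (by simp)

end Play

/-! ### Backward induction -/

noncomputable def argmaxP {α : Type*} [Finite α] (P : α → Prop) (f : α → ℝ)
    (x0 : α) (h0 : P x0) : α :=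
  haveI : Nonempty {c // P c} := ⟨⟨x0, h0⟩⟩
  (Finite.exists_max (fun c : {c // P c} => f c.1)).choose.1

theorem argmaxP_prop {α : Type*} [Finite α] (P : α → Prop) (f : α → ℝ)
    (x0 : α) (h0 : P x0) : P (argmaxP P f x0 h0) :=
  haveI : Nonempty {c // P c} := ⟨⟨x0, h0⟩⟩
  (Finite.exists_max (fun c : {c // P c} => f c.1)).choose.2

theorem argmaxP_max {α : Type*} [Finite α] (P : α → Prop) (f : α → ℝ)
    (x0 : α) (h0 : P x0) {c : α} (hc : P c) : f c ≤ f (argmaxP P f x0 h0) :=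
  haveI : Nonempty {c // P c} := ⟨⟨x0, h0⟩⟩
  (Finite.exists_max (fun c : {c // P c} => f c.1)).choose_spec ⟨c, hc⟩

open Classical in
noncomputable def V (G : Game n) (a0 : Profile G) (k : ℕ) (I : Hist G → Fin n)
    (h : Hist G) : Profile G :=
  if hcond : Terminal G a0 h ∨ bound G k < h.length then refpt G a0 h
  else
    V G a0 k I (h ++ [⟨I h, argmaxP (availAct G a0 k h (i := I h))
      (fun c => G.u (I h) (V G a0 k I (h ++ [⟨I h, c⟩]))) none avail_none⟩])
termination_by bound G k + 1 - h.length
decreasing_by all_goals (simp; omega)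

noncomputable def bestChoice (G : Game n) (a0 : Profile G) (k : ℕ) (I : Hist G → Fin n)
    (h : Hist G) : Option (G.A (I h)) :=
  argmaxP (availAct G a0 k h (i := I h))
    (fun c => G.u (I h) (V G a0 k I (h ++ [⟨I h, c⟩]))) none avail_none

theorem V_terminal {G : Game n} {a0 : Profile G} {k : ℕ} {I : Hist G → Fin n}
    {h : Hist G} (ht : Terminal G a0 h) : V G a0 k I h = refpt G a0 h := by
  rw [V]; exact dif_pos (Or.inl ht)

theorem V_step {G : Game n} {a0 : Profile G} {k : ℕ} {I : Hist G → Fin n}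
    {h : Hist G} (hnt : ¬ Terminal G a0 h) (hlen : h.length ≤ bound G k) :
    V G a0 k I h = V G a0 k I (h ++ [⟨I h, bestChoice G a0 k I h⟩]) := by
  rw [V, dif_neg (by push_neg; exact ⟨hnt, by omega⟩)]
  rfl

theorem bestChoice_avail {G : Game n} {a0 : Profile G} {k : ℕ} {I : Hist G → Fin n}
    (h : Hist G) : availAct G a0 k h (bestChoice G a0 k I h) :=
  argmaxP_prop _ _ _ _

theorem bestChoice_max {G : Game n} {a0 : Profile G} {k : ℕ} {I : Hist G → Fin n}
    {h : Hist G} {c : Option (G.A (I h))} (hc : availAct G a0 k h c) :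
    G.u (I h) (V G a0 k I (h ++ [⟨I h, c⟩])) ≤
      G.u (I h) (V G a0 k I (h ++ [⟨I h, bestChoice G a0 k I h⟩])) :=
  argmaxP_max (availAct G a0 k h (i := I h))
    (fun c => G.u (I h) (V G a0 k I (h ++ [⟨I h, c⟩]))) none avail_none hc

noncomputable def sigmaStar (G : Game n) (a0 : Profile G) (k : ℕ) (I : Hist G → Fin n) :
    StratProfile G :=
  fun i h => if hih : I h = i then hih ▸ bestChoice G a0 k I h else none

theorem sigmaStar_apply {G : Game n} {a0 : Profile G} {k : ℕ} {I : Hist G → Fin n}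
    (h : Hist G) : sigmaStar G a0 k I (I h) h = bestChoice G a0 k I h := by
  simp [sigmaStar]

theorem valid_sigmaStar {G : Game n} {a0 : Profile G} {k : ℕ} {I : Hist G → Fin n} :
    ValidProfile G a0 k I (sigmaStar G a0 k I) := by
  intro h hh hnt
  rw [sigmaStar_apply]
  exact bestChoice_avail h

section Main

variable {G : Game n} {a0 : Profile G} {k : ℕ} {I : Hist G → Fin n}
variable (hB : ∀ h : Hist G, IsNode G a0 k I h → h.length ≤ bound G k)
include hB

theorem V_eq_outcome :
    ∀ (d : ℕ) (h : Hist G), IsNode G a0 k I h → bound G k + 1 ≤ h.length + d →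
      outcomeFrom G a0 k I (sigmaStar G a0 k I) h = V G a0 k I h := by
  intro d
  induction d with
  | zero => intro h hh hd; exact absurd (hB h hh) (by omega)
  | succ d ih =>
    intro h hh hd
    by_cases ht : Terminal G a0 h
    · rw [outcomeFrom_terminal ht, V_terminal ht]
    · rw [outcomeFrom_succ hB valid_sigmaStar hh ht, V_step ht (hB h hh), sigmaStar_apply]
      refine ih _ ?_ (by simp; omega)
      rw [← sigmaStar_apply (I := I) h]
      exact hh.child G a0 k I ht (valid_sigmaStar h hh ht)

theorem main_le :
    ∀ (d : ℕ) (h : Hist G), IsNode G a0 k I h → bound G k + 1 ≤ h.length + d →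
      ∀ (i : Fin n) (σ' : StratProfile G), ValidProfile G a0 k I σ' →
      (∀ j, j ≠ i → σ' j = sigmaStar G a0 k I j) →
      G.u i (outcomeFrom G a0 k I σ' h) ≤ G.u i (V G a0 k I h) := by
  intro d
  induction d with
  | zero => intro h hh hd; exact absurd (hB h hh) (by omega)
  | succ d ih =>
    intro h hh hd i σ' hσ' hagree
    by_cases ht : Terminal G a0 h
    · rw [outcomeFrom_terminal ht, V_terminal ht]
    · have hchild : IsNode G a0 k I (h ++ [⟨I h, σ' (I h) h⟩]) :=
        hh.child G a0 k I ht (hσ' h hh ht)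
      rw [outcomeFrom_succ hB hσ' hh ht]
      have hIH := ih _ hchild (by simp; omega) i σ' hσ' hagree
      by_cases hij : I h = i
      · refine le_trans hIH ?_
        rw [V_step ht (hB h hh)]
        subst hij
        exact bestChoice_max (hσ' h hh ht)
      · have : σ' (I h) h = bestChoice G a0 k I h := by
          rw [hagree (I h) hij, sigmaStar_apply]
        rw [this] at hIH ⊢
        rw [V_step ht (hB h hh)]
        exact hIH

theorem spe_sigmaStar : SPE G a0 k I (sigmaStar G a0 k I) := by
  refine ⟨valid_sigmaStar, ?_⟩
  intro h hh hnt τ hτ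
  have h1 := main_le hB (bound G k + 1) h hh (by omega) (I h)
    (Function.update (sigmaStar G a0 k I) (I h) τ) hτ
    (fun j hj => Function.update_of_ne hj _ _)
  have h2 := V_eq_outcome hB (bound G k + 1) h hh (by omega)
  rw [← h2] at h1
  exact h1

end Main


/-! ### The length bound -/

section Bound

variable {G : Game n} {a0 : Profile G} {k : ℕ} {I : Hist G → Fin n}

theorem sum_count_eq_length (l : List (Fin n)) : ∑ i, l.count i = l.length := by
  induction l with
  | nil => simp
  | cons a l ih => simp [List.count_cons, Finset.sum_add_distrib, ih]

theorem balanced_eq {c : Fin n → ℕ} {q : ℕ} (hn : 0 < n)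
    (hbal : ∀ i j, c i ≤ c j + 1) (hsum : ∑ i, c i = n * q) : ∀ i, c i = q := by
  intro i
  have hi : i ∈ (Finset.univ : Finset (Fin n)) := Finset.mem_univ i
  have hsplit : ∑ j ∈ Finset.univ.erase i, c j + c i = n * q := by
    rw [Finset.sum_erase_add _ _ hi, hsum]
  have hcard : (Finset.univ.erase i).card = n - 1 := by
    rw [Finset.card_erase_of_mem hi, Finset.card_univ, Fintype.card_fin]
  by_contra hne
  rcases Nat.lt_or_ge (c i) q with hlt | hge
  · -- all other counts ≤ c i + 1 ≤ q
    have hb : ∀ j ∈ Finset.univ.erase i, c j ≤ q := fun j _ =>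
      le_trans (hbal j i) (by omega)
    have h1 : ∑ j ∈ Finset.univ.erase i, c j ≤ (n - 1) * q := by
      have := Finset.sum_le_card_nsmul (Finset.univ.erase i) c q hb
      simpa [hcard, smul_eq_mul] using this
    have h3 : (n - 1) * q + q = n * q := by
      have hn1 : n - 1 + 1 = n := by omega
      calc (n - 1) * q + q = (n - 1 + 1) * q := by ring
        _ = n * q := by rw [hn1]
    omega
  · have hgt : q < c i := by omega
    have hb : ∀ j ∈ Finset.univ.erase i, q ≤ c j := fun j _ => by
      have := hbal i j; omega
    have h1 : (n - 1) * q ≤ ∑ j ∈ Finset.univ.erase i, c j := by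
      have := Finset.card_nsmul_le_sum (Finset.univ.erase i) c q hb
      simpa [hcard, smul_eq_mul] using this
    have h3 : (n - 1) * q + q = n * q := by
      have hn1 : n - 1 + 1 = n := by omega
      calc (n - 1) * q + q = (n - 1 + 1) * q := by ring
        _ = n * q := by rw [hn1]
    omega

/-- In the window `[L-n, L)` with `n ∣ L`, every player moves (given
admissibility). -/
theorem window_all_players (hn : 0 < n) (hI : Admissible G a0 k I)
    {h : Hist G} (hh : IsNode G a0 k I h) {q L : ℕ} (hq : 1 ≤ q) (hL : L = n * q)
    (hLlen : L ≤ h.length) :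
    ∀ i : Fin n, ∃ m ∈ (h.take L).drop (L - n), m.1 = i := by
  intro i
  set w : Hist G := (h.take L).drop (L - n) with hw
  have hdecomp : h.take (L - n) ++ w = h.take L := by
    have h1 : (h.take L).take (L - n) = h.take (L - n) := by
      rw [List.take_take]; congr 1; omega
    rw [hw, ← h1, List.take_append_drop]
  have hcount : ∀ {L' q' : ℕ}, L' = n * q' → L' ≤ h.length →
      ∀ j, ((h.take L').map Sigma.fst).count j = q' := by
    intro L' q' hL' hle j
    refine balanced_eq hn (fun i1 j1 => hI _ (hh.take G a0 k I L') i1 j1) ?_ j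
    rw [sum_count_eq_length, List.length_map, List.length_take, hL']
    omega
  have hcL : ((h.take L).map Sigma.fst).count i = q := hcount hL hLlen i
  have hLn : L - n = n * (q - 1) := by
    obtain ⟨q', rfl⟩ : ∃ q', q = q' + 1 := ⟨q - 1, by omega⟩
    rw [hL, Nat.mul_succ]
    simp
  have hcL' : ((h.take (L - n)).map Sigma.fst).count i = q - 1 := by
    refine hcount hLn (by omega) i
  have hsum : ((h.take (L - n)).map Sigma.fst).count i + ((w.map Sigma.fst).count i)
      = q := by
    rw [← List.count_append, ← List.map_append, hdecomp, hcL]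
  have hpos : 0 < (w.map Sigma.fst).count i := by omega
  rw [List.count_pos_iff, List.mem_map] at hpos
  obtain ⟨m, hm, hm2⟩ := hpos
  exact ⟨m, hm, hm2⟩

/-- A node contains no `2n` consecutive passes strictly inside it. -/
theorem no_pass_stretch (hn : 0 < n) (hI : Admissible G a0 k I)
    {h : Hist G} (hh : IsNode G a0 k I h) {t : ℕ} (ht : t + 2 * n < h.length) :
    ¬ (∀ u, t ≤ u → u < t + 2 * n → ∀ m : Move G, h[u]? = some m → m.2 = none) := by
  intro hpass
  obtain ⟨q0, r, hr, ht0⟩ : ∃ q0 r, r < n ∧ t = n * q0 + r :=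
    ⟨t / n, t % n, Nat.mod_lt t hn, (Nat.div_add_mod t n).symm⟩
  obtain ⟨a, ha⟩ : ∃ a, a = n * q0 := ⟨_, rfl⟩
  rw [← ha] at ht0
  set L : ℕ := a + 2 * n with hLdef
  have hL : L = n * (q0 + 2) := by
    rw [Nat.mul_add, ← ha, hLdef]; ring
  have hL1 : t < L - n := by omega
  have hL2 : L ≤ t + 2 * n := by omega
  have hLlen : L < h.length := by omega
  have hq1 : 1 ≤ q0 + 2 := by omega
  have hnL : n ≤ L := by omega
  refine hh.nonterm L hLlen (Or.inr ?_)
  have hlen : (h.take L).length = L := by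
    rw [List.length_take]; omega
  have hwlen : ((h.take L).drop (L - n)).length = n := by
    rw [List.length_drop, hlen]; omega
  refine ⟨by omega, ?_, ?_⟩
  · intro m hm
    rw [hlen] at hm
    rw [List.mem_iff_getElem] at hm
    obtain ⟨j, hj, hjm⟩ := hm
    rw [hwlen] at hj
    have hbound : L - n + j < h.length := by omega
    have hidx : ((h.take L).drop (L - n))[j]'(by omega) = h[L - n + j]'hbound := by
      rw [List.getElem_drop]
      simp [List.getElem_take]
    refine hpass (L - n + j) (by omega) (by omega) m ?_
    rw [← hjm, hidx]
    exact List.getElem?_eq_getElem hbound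
  · intro i
    obtain ⟨m, hm, hm1⟩ := window_all_players hn hI hh hq1 hL (by omega) i
    rw [hlen]
    exact ⟨m, hm, hm1⟩

end Bound


section Bound2

variable {G : Game n} {a0 : Profile G} {k : ℕ} {I : Hist G → Fin n}

noncomputable def extract (G : Game n) : Move G → Σ i, G.A i :=
  fun m => match m with
  | ⟨i, some a⟩ => ⟨i, a⟩
  | ⟨i, none⟩ => ⟨i, Classical.choice (G.neA i)⟩

theorem extract_eq {m : Move G} {i : Fin n} {a : G.A i}
    (hm : m.2 ≠ none) (he : extract G m = ⟨i, a⟩) : m = ⟨i, some a⟩ := by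
  obtain ⟨j, o⟩ := m
  cases o with
  | none => simp at hm
  | some b =>
    have he' : (⟨j, b⟩ : Σ i, G.A i) = ⟨i, a⟩ := he
    obtain ⟨rfl, hba⟩ := Sigma.mk.inj_iff.mp he'
    rw [eq_of_heq hba]

/-- The set of positions in `h` at which a non-pass move was made. -/
def nonPassSet (G : Game n) (h : Hist G) : Finset ℕ :=
  (Finset.range h.length).filter (fun t => ¬ ∃ i : Fin n, h[t]? = some (⟨i, none⟩ : Move G))

theorem mem_nonPassSet {h : Hist G} {t : ℕ} :
    t ∈ nonPassSet G h ↔ t < h.length ∧ ¬ ∃ i : Fin n, h[t]? = some (⟨i, none⟩ : Move G) := by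
  simp [nonPassSet]

theorem nonpass_get {h : Hist G} {t : ℕ} (ht : t ∈ nonPassSet G h) :
    ∃ (hlt : t < h.length), (h[t]'hlt).2 ≠ none := by
  rw [mem_nonPassSet] at ht
  refine ⟨ht.1, fun hcon => ht.2 ?_⟩
  refine ⟨(h[t]'ht.1).1, ?_⟩
  have heq : some (h[t]'ht.1) = some (⟨(h[t]'ht.1).1, none⟩ : Move G) := by
    congr 1
    exact Sigma.ext rfl (heq_of_eq hcon)
  exact (List.getElem?_eq_getElem ht.1).trans heq

theorem nonPassSet_card_le (hh : IsNode G a0 k I h) :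
    (nonPassSet G h).card
      ≤ k * (Fintype.card (Profile G) * ∑ i, Fintype.card (G.A i)) := by
  classical
  set jm : Move G := ⟨I [], none⟩ with hjm
  set f : ℕ → Profile G × (Σ i, G.A i) :=
    fun t => (state G a0 (h.take t), extract G (h.getD t jm)) with hf
  -- key fact about members of fibers
  have key : ∀ t ∈ nonPassSet G h, ∀ (s : Profile G) (i : Fin n) (a : G.A i),
      f t = (s, ⟨i, a⟩) →
      ∃ hlt : t < h.length, h[t] = (⟨i, some a⟩ : Move G) ∧ state G a0 (h.take t) = s := by
    intro t ht s i a hft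
    obtain ⟨hlt, hnp⟩ := nonpass_get ht
    have hgd : h.getD t jm = h[t] := List.getD_eq_getElem h jm hlt
    have h1 : state G a0 (h.take t) = s := congrArg Prod.fst hft
    have h2 : extract G (h[t]'hlt) = ⟨i, a⟩ := by
      rw [← hgd]; exact congrArg Prod.snd hft
    exact ⟨hlt, extract_eq hnp h2, h1⟩
  have hfiber : ∀ b ∈ (nonPassSet G h).image f,
      ((nonPassSet G h).filter (fun t => f t = b)).card ≤ k := by
    rintro ⟨s, i, a⟩ hb
    set T := (nonPassSet G h).filter (fun t => f t = (s, ⟨i, a⟩)) with hT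
    rcases T.eq_empty_or_nonempty with hTe | hTne
    · rw [hTe]; simp
    set tm := T.max' hTne with htm
    have htmT : tm ∈ T := T.max'_mem hTne
    have htmNP : tm ∈ nonPassSet G h := (Finset.mem_filter.mp htmT).1
    obtain ⟨hlt, hget, hst⟩ := key tm htmNP s i a (Finset.mem_filter.mp htmT).2
    have htake : (h.take tm).length = tm := by
      rw [List.length_take]; omega
    -- availability at tm bounds the number of earlier equal choices
    have havail := hh.avail tm hlt
    have hget' : h.get ⟨tm, hlt⟩ = (⟨i, some a⟩ : Move G) := by
      rw [List.get_eq_getElem]; exact hget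
    rw [hget'] at havail
    have hcnt : countAct G a0 (h.take tm) ⟨i, some a⟩ < k := havail a rfl
    have hsub : T.erase tm ⊆ (Finset.range (h.take tm).length).filter
        (fun u => (h.take tm)[u]? = some (⟨i, some a⟩ : Move G) ∧
          state G a0 ((h.take tm).take u) = state G a0 (h.take tm)) := by
      intro u hu
      have huT : u ∈ T := Finset.mem_of_mem_erase hu
      have hune : u ≠ tm := Finset.ne_of_mem_erase hu
      have hule : u ≤ tm := T.le_max' u huT
      have hult : u < tm := lt_of_le_of_ne hule hune
      have huNP : u ∈ nonPassSet G h := (Finset.mem_filter.mp huT).1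
      obtain ⟨hult', huget, hust⟩ := key u huNP s i a (Finset.mem_filter.mp huT).2
      rw [Finset.mem_filter, Finset.mem_range, htake]
      refine ⟨hult, ?_, ?_⟩
      · rw [List.getElem?_take, if_pos hult, List.getElem?_eq_getElem hult', huget]
      · rw [List.take_take, min_eq_left (le_of_lt hult), hust, hst]
    have hc1 : (T.erase tm).card ≤ countAct G a0 (h.take tm) ⟨i, some a⟩ := by
      rw [countAct]
      exact Finset.card_le_card hsub
    have hc2 : (T.erase tm).card = T.card - 1 := Finset.card_erase_of_mem htmT
    have hpos : 0 < T.card := Finset.card_pos.mpr hTne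
    omega
  have h1 := Finset.card_le_mul_card_image (f := f) (nonPassSet G h) k hfiber
  have h2 : ((nonPassSet G h).image f).card
      ≤ Fintype.card (Profile G) * ∑ i, Fintype.card (G.A i) := by
    calc ((nonPassSet G h).image f).card
        ≤ Fintype.card (Profile G × Σ i, G.A i) := Finset.card_le_univ _
      _ = Fintype.card (Profile G) * ∑ i, Fintype.card (G.A i) := by
          rw [Fintype.card_prod, Fintype.card_sigma]
  calc (nonPassSet G h).card ≤ k * ((nonPassSet G h).image f).card := h1
    _ ≤ k * (Fintype.card (Profile G) * ∑ i, Fintype.card (G.A i)) :=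
        Nat.mul_le_mul_left k h2

theorem length_le_bound (hn : 2 ≤ n) (hI : Admissible G a0 k I) :
    ∀ h : Hist G, IsNode G a0 k I h → h.length ≤ bound G k := by
  intro h hh
  have hn0 : 0 < n := by omega
  set C := Fintype.card (Profile G) with hC
  set S := ∑ i, Fintype.card (G.A i) with hS
  set M := k * (C * S) with hM
  have hNP : (nonPassSet G h).card ≤ M := nonPassSet_card_le hh
  -- arithmetic: 2n(M+1)+1 ≤ bound
  have e1 : M ≤ (k + 2) * (C + 2) * (S + 2) := by
    calc M = k * C * S := by rw [hM]; ring
      _ ≤ (k + 2) * (C + 2) * (S + 2) :=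
        Nat.mul_le_mul (Nat.mul_le_mul (by omega) (by omega)) (by omega)
  have e2 : 2 * n * (M + 1) + 1 ≤ (M + 2) * (n + 2) * 4 := by nlinarith
  have e3 : (M + 2) * (n + 2) * 4 ≤ bound G k := by
    rw [bound, ← hC, ← hS]
    exact Nat.mul_le_mul (Nat.mul_le_mul (by omega) le_rfl) le_rfl
  by_contra hlen
  push_neg at hlen
  have hlen2 : 2 * n * (M + 1) + 2 ≤ h.length := by omega
  -- each block of 2n consecutive positions contains a non-pass
  have H : ∀ j : ℕ, ∃ u, j ≤ M →
      2 * n * j ≤ u ∧ u < 2 * n * j + 2 * n ∧ u ∈ nonPassSet G h := by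
    intro j
    by_cases hj : j ≤ M
    · have hblock : 2 * n * j + 2 * n < h.length := by
        have : 2 * n * j + 2 * n = 2 * n * (j + 1) := by ring
        rw [this]
        have h4 : 2 * n * (j + 1) ≤ 2 * n * (M + 1) :=
          Nat.mul_le_mul_left _ (by omega)
        omega
      have := no_pass_stretch hn0 hI hh hblock
      push_neg at this
      obtain ⟨u, hu1, hu2, m, hm1, hm2⟩ := this
      refine ⟨u, fun _ => ⟨hu1, hu2, ?_⟩⟩
      rw [mem_nonPassSet]
      have hul : u < h.length := by omega
      refine ⟨hul, fun hcon => hm2 ?_⟩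
      obtain ⟨i, hi⟩ := hcon
      rw [hm1] at hi
      rw [Option.some_inj.mp hi]
    · exact ⟨0, fun hc => absurd hc hj⟩
  choose g hg using H
  have hinj : ∀ j j', j ≤ M → j' ≤ M → j < j' → g j ≠ g j' := by
    intro j j' hj hj' hlt heq
    obtain ⟨h1, h2, _⟩ := hg j hj
    obtain ⟨h1', h2', _⟩ := hg j' hj'
    have hstep : 2 * n * j + 2 * n ≤ 2 * n * j' := by
      have : 2 * n * (j + 1) ≤ 2 * n * j' := Nat.mul_le_mul_left _ (by omega)
      have h5 : 2 * n * (j + 1) = 2 * n * j + 2 * n := by ring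
      omega
    rw [heq] at h2
    omega
  have hcard : M + 1 ≤ (nonPassSet G h).card := by
    have := Finset.card_le_card_of_injOn g
      (fun j hj => (hg j (by simpa using Nat.lt_succ_iff.mp (Finset.mem_range.mp hj))).2.2)
      (fun j hj j' hj' heq => by
        simp only [Finset.coe_range, Set.mem_Iio] at hj hj'
        by_contra hne
        rcases Nat.lt_or_ge j j' with hlt | hge
        · exact hinj j j' (by omega) (by omega) hlt heq
        · exact hinj j' j (by omega) (by omega) (by omega) heq.symm)
    simpa using this
  omega

end Bound2



/-- `Γ(a0,k,I)` is a well-defined finite extensive form game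
with perfect information: the lengths of its nodes are uniformly bounded, and
every play (under any valid strategy profile) reaches a terminal node after
finitely many steps; consequently `Γ(a0,k,I)` possesses a subgame perfect
equilibrium in pure strategies. -/
theorem gamma_finite_and_spe_exists {n : ℕ} (hn : 2 ≤ n) (G : Game n)
    (hG : StrictPrefs G) (a0 : Profile G) (k : ℕ) (hk : 0 < k)
    (I : Hist G → Fin n) (hI : Admissible G a0 k I) :
    (∃ B : ℕ, ∀ h : Hist G, IsNode G a0 k I h → h.length ≤ B) ∧
    (∀ σ : StratProfile G, ValidProfile G a0 k I σ →
      ∃ t : ℕ, Terminal G a0 (playN G a0 I σ t [])) ∧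
    (∃ σ : StratProfile G, SPE G a0 k I σ) := by
  have hB : ∀ h : Hist G, IsNode G a0 k I h → h.length ≤ bound G k :=
    length_le_bound hn hI
  refine ⟨⟨bound G k, hB⟩, ?_, ⟨sigmaStar G a0 k I, spe_sigmaStar hB⟩⟩
  intro σ hσ
  exact ⟨bound G k + 1, play_terminal hB hσ _ [] (isNode_nil G a0 k I) (by simp)⟩

end NoHarm
end

section
/- Consider the two-player game G with action sets A₁ = A₂ = {L, R} and utilities (u₁,u₂) given by (L,L) = (2,2), (L,R) = (0,3), (R,L) = (1,0), (R,R) = (4,4). With initial reference point a₀ = (L,L), k = 1, and the strictly alternating player function in which player 2 (Column) moves first, there exists a pure strategy profile of Γ(a₀,k,I) that satisfies the no-harm principle and whose outcome is (R,L), with payoffs (1,0) strictly Pareto dominated by the initial reference point payoffs (2,2). Hence the no-harm principle alone, without farsighted rationality, does not guarantee even a weak Pareto improvement over the initial reference point. -/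
namespace NoHarm

variable {n : ℕ}

/-- The game of Section 4.1.2: actions `0 = L`, `1 = R`, payoffs
`(L,L)=(2,2), (L,R)=(0,3), (R,L)=(1,0), (R,R)=(4,4)`. -/
def g14 : Game 2 where
  A _ := Fin 2
  fintypeA _ := inferInstance
  decA _ := inferInstance
  neA _ := inferInstance
  u i s :=
    if s 0 = 0 then
      (if s 1 = 0 then 2 else (if i = 0 then 0 else 3))
    else
      (if s 1 = 0 then (if i = 0 then 1 else 0) else 4)

/-- The strictly alternating player function with player `1` (Column) first. -/
def altI14 : Hist g14 → Fin 2 := fun h => ⟨(h.length + 1) % 2, by omega⟩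

/-- (L,L), the initial reference point. -/
def ll14 : Profile g14 := fun _ => (0 : Fin 2)

/-- (R,L). -/
def rl14 : Profile g14 := fun i => if i = 0 then (1 : Fin 2) else (0 : Fin 2)

section Proof14

def m0 : Move g14 := ⟨1, some (1 : Fin 2)⟩
def m1 : Move g14 := ⟨0, some (0 : Fin 2)⟩
def m2 : Move g14 := ⟨1, some (0 : Fin 2)⟩
def m3 : Move g14 := ⟨0, some (1 : Fin 2)⟩
def m4 : Move g14 := ⟨1, some (0 : Fin 2)⟩
def m5 : Move g14 := ⟨0, some (1 : Fin 2)⟩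

def hh : ℕ → Hist g14
  | 0 => [] | 1 => [m0] | 2 => [m0,m1] | 3 => [m0,m1,m2]
  | 4 => [m0,m1,m2,m3] | 5 => [m0,m1,m2,m3,m4] | _ => [m0,m1,m2,m3,m4,m5]

def lr14 : Profile g14 := fun i => if i = 0 then (0:Fin 2) else (1:Fin 2)

def sig14 : StratProfile g14 := fun _ h =>
  if h = hh 0 then some (1 : Fin 2) else if h = hh 1 then some (0 : Fin 2)
  else if h = hh 2 then some (0 : Fin 2) else if h = hh 3 then some (1 : Fin 2)
  else if h = hh 4 then some (0 : Fin 2) else if h = hh 5 then some (1 : Fin 2)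
  else none

lemma sig_cases {i : Fin 2} {h : Hist g14} {c : g14.A i} (hc : sig14 i h = some c) :
    (h = hh 0 ∧ c = (1:Fin 2)) ∨ (h = hh 1 ∧ c = (0:Fin 2)) ∨
    (h = hh 2 ∧ c = (0:Fin 2)) ∨ (h = hh 3 ∧ c = (1:Fin 2)) ∨
    (h = hh 4 ∧ c = (0:Fin 2)) ∨ (h = hh 5 ∧ c = (1:Fin 2)) := by
  unfold sig14 at hc
  split at hc
  · exact Or.inl ⟨by assumption, (Option.some_inj.mp hc).symm⟩
  split at hc
  · exact Or.inr (Or.inl ⟨by assumption, (Option.some_inj.mp hc).symm⟩)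
  split at hc
  · exact Or.inr (Or.inr (Or.inl ⟨by assumption, (Option.some_inj.mp hc).symm⟩))
  split at hc
  · exact Or.inr (Or.inr (Or.inr (Or.inl ⟨by assumption, (Option.some_inj.mp hc).symm⟩)))
  split at hc
  · exact Or.inr (Or.inr (Or.inr (Or.inr (Or.inl ⟨by assumption, (Option.some_inj.mp hc).symm⟩))))
  split at hc
  · exact Or.inr (Or.inr (Or.inr (Or.inr (Or.inr ⟨by assumption, (Option.some_inj.mp hc).symm⟩))))
  · exact absurd hc (by simp)

lemma snoc_inj {α : Type*} {l l' : List α} {x y : α} (h : l ++ [x] = l' ++ [y]) :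
    l = l' ∧ x = y := by
  have h2 := List.append_inj' h rfl
  exact ⟨h2.1, by simpa using h2.2⟩

lemma nt0 : ¬ Terminal g14 ll14 (hh 0) := by
  rintro (⟨h', m, i, heq, _⟩ | tp)
  · simp [hh] at heq
  · exact absurd tp (by unfold TerminalPass; decide)

lemma nt1 : ¬ Terminal g14 ll14 (hh 1) := by
  rintro (⟨h', m, i, heq, hst, _⟩ | tp)
  · obtain ⟨e1, e2⟩ := snoc_inj (show (hh 0) ++ [m0] = h' ++ [m] from heq)
    subst e1; subst e2
    exact absurd hst (by unfold IsStay; decide)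
  · exact absurd tp (by unfold TerminalPass; decide)

lemma nt2 : ¬ Terminal g14 ll14 (hh 2) := by
  rintro (⟨h', m, i, heq, _, hrs, _⟩ | tp)
  · obtain ⟨e1, e2⟩ := snoc_inj (show (hh 1) ++ [m1] = h' ++ [m] from heq)
    subst e1; subst e2
    exact absurd hrs (by decide)
  · exact absurd tp (by unfold TerminalPass; decide)

lemma nt3 : ¬ Terminal g14 ll14 (hh 3) := by
  rintro (⟨h', m, i, heq, hst, _⟩ | tp)
  · obtain ⟨e1, e2⟩ := snoc_inj (show (hh 2) ++ [m2] = h' ++ [m] from heq)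
    subst e1; subst e2
    exact absurd hst (by unfold IsStay; decide)
  · exact absurd tp (by unfold TerminalPass; decide)

lemma nt4 : ¬ Terminal g14 ll14 (hh 4) := by
  rintro (⟨h', m, i, heq, hst, _⟩ | tp)
  · obtain ⟨e1, e2⟩ := snoc_inj (show (hh 3) ++ [m3] = h' ++ [m] from heq)
    subst e1; subst e2
    exact absurd hst (by unfold IsStay; decide)
  · exact absurd tp (by unfold TerminalPass; decide)

lemma nt5 : ¬ Terminal g14 ll14 (hh 5) := by
  rintro (⟨h', m, i, heq, _, hrs, _⟩ | tp)
  · obtain ⟨e1, e2⟩ := snoc_inj (show (hh 4) ++ [m4] = h' ++ [m] from heq)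
    subst e1; subst e2
    exact absurd hrs (by decide)
  · exact absurd tp (by unfold TerminalPass; decide)

lemma term6 : Terminal g14 ll14 (hh 6) :=
  Or.inl ⟨hh 5, m5, 1, rfl, by unfold IsStay; decide, by decide, by decide, by decide⟩

lemma playN_step {G : Game n} {a0 : Profile G} {I : Hist G → Fin n}
    {σ : StratProfile G} {t : ℕ} {h : Hist G} (hnt : ¬ Terminal G a0 h) :
    playN G a0 I σ (t+1) h = playN G a0 I σ t (h ++ [⟨I h, σ (I h) h⟩]) := by
  rw [playN, if_neg hnt]

lemma playN_of_terminal {G : Game n} {a0 : Profile G} {I : Hist G → Fin n}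
    {σ : StratProfile G} {h : Hist G} (ht : Terminal G a0 h) :
    ∀ t, playN G a0 I σ t h = h
  | 0 => rfl
  | (t+1) => by rw [playN, if_pos ht]

lemma st0 : hh 0 ++ [⟨altI14 (hh 0), sig14 (altI14 (hh 0)) (hh 0)⟩] = hh 1 := by decide
lemma st1 : hh 1 ++ [⟨altI14 (hh 1), sig14 (altI14 (hh 1)) (hh 1)⟩] = hh 2 := by decide
lemma st2 : hh 2 ++ [⟨altI14 (hh 2), sig14 (altI14 (hh 2)) (hh 2)⟩] = hh 3 := by decide
lemma st3 : hh 3 ++ [⟨altI14 (hh 3), sig14 (altI14 (hh 3)) (hh 3)⟩] = hh 4 := by decide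
lemma st4 : hh 4 ++ [⟨altI14 (hh 4), sig14 (altI14 (hh 4)) (hh 4)⟩] = hh 5 := by decide
lemma st5 : hh 5 ++ [⟨altI14 (hh 5), sig14 (altI14 (hh 5)) (hh 5)⟩] = hh 6 := by decide

lemma outcome14 : outcome g14 ll14 1 altI14 sig14 = rl14 := by
  unfold outcome outcomeFrom
  rw [show ([] : Hist g14) = hh 0 from rfl]
  rw [show bound g14 1 + 1 = 1760 + 1 from by decide]
  rw [playN_step nt0, st0, show (1760:ℕ) = 1759 + 1 from rfl,
      playN_step nt1, st1, show (1759:ℕ) = 1758 + 1 from rfl,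
      playN_step nt2, st2, show (1758:ℕ) = 1757 + 1 from rfl,
      playN_step nt3, st3, show (1757:ℕ) = 1756 + 1 from rfl,
      playN_step nt4, st4, show (1756:ℕ) = 1755 + 1 from rfl,
      playN_step nt5, st5, playN_of_terminal term6]
  decide

end Proof14

/-- In the game above with initial reference point `(L,L)`,
`k = 1`, and the strictly alternating player function with Column first, some
valid strategy profile satisfies the no-harm principle yet has outcome `(R,L)`,
whose payoffs `(1,0)` are strictly Pareto dominated by the initial reference
point payoffs `(2,2)`: the NHP alone does not guarantee even a weak Pareto
improvement over the initial reference point. -/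
theorem nhp_alone_no_pareto_improvement :
    ∃ σ : StratProfile g14,
      ValidProfile g14 ll14 1 altI14 σ ∧ SatNHP g14 ll14 1 altI14 σ ∧
      outcome g14 ll14 1 altI14 σ = rl14 ∧
      StrictDom g14 ll14 rl14 := by
  refine ⟨sig14, ?_, ?_, outcome14, ?_⟩
  · intro h _ _ a ha
    rcases sig_cases ha with ⟨rfl, rfl⟩ | ⟨rfl, rfl⟩ | ⟨rfl, rfl⟩ | ⟨rfl, rfl⟩ |
      ⟨rfl, rfl⟩ | ⟨rfl, rfl⟩ <;> decide
  · intro h _ _ hstay j hj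
    rcases sig_cases hstay with ⟨rfl, e⟩ | ⟨rfl, e⟩ | ⟨rfl, e⟩ | ⟨rfl, e⟩ |
      ⟨rfl, e⟩ | ⟨rfl, e⟩
    · exact absurd e (of_decide_eq_false (inst := instDecidableEqFin _ _ _) rfl)
    · fin_cases j
      · exact absurd rfl (by exact_mod_cast hj)
      · rw [show refpt g14 ll14 (hh 1) = ll14 from by decide,
            show state g14 ll14 (hh 1) = lr14 from by decide]
        simp [g14, ll14, lr14]
        norm_num
    · exact absurd e (of_decide_eq_false (inst := instDecidableEqFin _ _ _) rfl)
    · exact absurd e (of_decide_eq_false (inst := instDecidableEqFin _ _ _) rfl)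
    · fin_cases j
      · rw [show refpt g14 ll14 (hh 4) = lr14 from by decide,
            show state g14 ll14 (hh 4) = rl14 from by decide]
        simp [g14, lr14, rl14]
      · exact absurd rfl (by exact_mod_cast hj)
    · fin_cases j
      · exact absurd rfl (by exact_mod_cast hj)
      · rw [show refpt g14 ll14 (hh 5) = rl14 from by decide,
            show state g14 ll14 (hh 5) = rl14 from by decide]
  · intro i
    fin_cases i <;> simp [g14, ll14, rl14]

end NoHarm
end
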